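/- arXiv:math/0702160 — 2 statements merged into one kernel-verified Lean document; each statement's English description precedes it below -/
import Mathlib

section
/- Let p be a prime number. The p-adic exponential series has positive radius of convergence, with the explicit bound: for every x in the field ℚ_p of p-adic numbers with ‖x‖_p < p^(−1/(p−1)), the series Σ_{n=0}^∞ xⁿ/n! converges in ℚ_p (i.e. the family n ↦ xⁿ/n! is summable). -/
/-! Legendre's formula `(p - 1) v_p(n!) = n - s_p(n)` gives `v_p(n!) ≤ n / (p - 1)`, hence
`‖xⁿ / n!‖ ≤ (‖x‖ p^(1/(p-1)))ⁿ`, and the series is dominated by a convergent geometric series. -/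

open Nat

section

variable {𝕜 : Type*} [NormedDivisionRing 𝕜] [CompleteSpace 𝕜]

theorem summable_pow_div_of_norm_inv_le_pow {a : ℕ → 𝕜} {c : ℝ} (ha : ∀ n, ‖a n‖⁻¹ ≤ c ^ n)
    {x : 𝕜} (hx : ‖x‖ * c < 1) : Summable fun n ↦ x ^ n / a n := by
  have hc : 0 ≤ c := (inv_nonneg.2 (norm_nonneg _)).trans (pow_one c ▸ ha 1)
  refine .of_norm_bounded (summable_geometric_of_lt_one (by positivity) hx) fun n ↦ ?_
  calc ‖x ^ n / a n‖ = ‖x‖ ^ n * ‖a n‖⁻¹ := by rw [norm_div, norm_pow, div_eq_mul_inv]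
    _ ≤ ‖x‖ ^ n * c ^ n := by gcongr; exact ha n
    _ = (‖x‖ * c) ^ n := (mul_pow _ _ _).symm

end

theorem sub_one_mul_padicValNat_factorial_le (p : ℕ) [Fact p.Prime] (n : ℕ) :
    (p - 1) * padicValNat p n ! ≤ n :=
  sub_one_mul_padicValNat_factorial (p := p) n ▸ Nat.sub_le _ _

namespace Padic

variable {p : ℕ} [hp : Fact p.Prime]

theorem norm_natCast_inv_eq_zpow_padicValNat {n : ℕ} (hn : n ≠ 0) :
    ‖(n : ℚ_[p])‖⁻¹ = (p : ℝ) ^ (padicValNat p n : ℤ) := by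
  rw [norm_eq_zpow_neg_valuation (by exact_mod_cast hn), valuation_natCast, zpow_neg, inv_inv]

theorem norm_factorial_inv_le (n : ℕ) :
    ‖(n ! : ℚ_[p])‖⁻¹ ≤ ((p : ℝ) ^ (1 / (p - 1 : ℝ))) ^ n := by
  have hp1 : (1 : ℝ) < p := by exact_mod_cast hp.out.one_lt
  have hlegendre : ((p : ℝ) - 1) * padicValNat p n ! ≤ n := by
    have := Nat.cast_le (α := ℝ) |>.2 (sub_one_mul_padicValNat_factorial_le p n)
    rwa [Nat.cast_mul, Nat.cast_sub hp.out.one_le, Nat.cast_one] at this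
  rw [norm_natCast_inv_eq_zpow_padicValNat (factorial_ne_zero n), ← Real.rpow_natCast,
    ← Real.rpow_mul (by positivity), ← Real.rpow_intCast, Int.cast_natCast]
  refine Real.rpow_le_rpow_of_exponent_le hp1.le ?_
  rw [one_div_mul_eq_div, le_div_iff₀ (by linarith)]
  linarith

end Padic

theorem padic_exp_series_converges
    (p : ℕ) [Fact p.Prime] (x : ℚ_[p])
    (hx : ‖x‖ < (p : ℝ) ^ (-(1 : ℝ) / (p - 1))) :
    Summable (fun n : ℕ => x ^ n / (n.factorial : ℚ_[p])) := by
  refine summable_pow_div_of_norm_inv_le_pow Padic.norm_factorial_inv_le ?_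
  have hp : (0 : ℝ) < p := by exact_mod_cast (Fact.out : p.Prime).pos
  calc ‖x‖ * (p : ℝ) ^ (1 / (p - 1 : ℝ))
      < (p : ℝ) ^ (-(1 : ℝ) / (p - 1)) * (p : ℝ) ^ (1 / (p - 1 : ℝ)) := by gcongr
    _ = 1 := by rw [← Real.rpow_add hp, neg_div, neg_add_cancel, Real.rpow_zero]
end

section
/- Let A be a real Banach algebra and let D be a continuous linear derivation on A, i.e. a bounded linear map D : A → A satisfying D(ab) = D(a)·b + a·D(b) for all a, b ∈ A. Then the exponential exp(D) is an algebra automorphism of A; in particular, exp(D)(a·b) = exp(D)(a) · exp(D)(b) for all a, b ∈ A, and exp(D) is invertible with inverse exp(−D). -/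
/-! Iterating the Leibniz rule gives `Dⁿ (a b) = ∑_{i+j=n} (n choose i) Dⁱ a Dʲ b`, so after
dividing by `n!` the exponential series of `D` applied to `a b` is exactly the Cauchy product
of the series for `exp D a` and `exp D b`. Invertibility only uses that `D` commutes with `-D`. -/

open NormedSpace Finset Nat

theorem iterate_map_mul_of_leibniz {A F : Type*} [NonUnitalNonAssocSemiring A] [FunLike F A A]
    [AddMonoidHomClass F A A] (D : F)
    (hD : ∀ a b : A, D (a * b) = D a * b + a * D b) (n : ℕ) (a b : A) :
    D^[n] (a * b) = ∑ ij ∈ antidiagonal n, n.choose ij.1 • (D^[ij.1] a * D^[ij.2] b) := by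
  induction n with
  | zero => simp
  | succ n ih =>
    rw [sum_antidiagonal_choose_succ_nsmul (fun i j => D^[i] a * D^[j] b) n]
    simp only [Function.iterate_succ_apply', ih, map_sum, map_nsmul, hD, smul_add,
      sum_add_distrib]
    rw [add_comm]
    congr 1
    refine sum_congr rfl fun ⟨i, j⟩ hij => ?_
    rw [n.choose_symm_of_eq_add (mem_antidiagonal.1 hij).symm]

section ExpApply

variable {𝕂 E : Type*} [RCLike 𝕂] [NormedAddCommGroup E] [NormedSpace 𝕂 E]

theorem summable_norm_expSeries_apply (T : E →L[𝕂] E) (x : E) :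
    Summable fun n => ‖(n !⁻¹ : 𝕂) • (T ^ n) x‖ :=
  ((norm_expSeries_summable' T).mul_right ‖x‖).of_nonneg_of_le (fun _ => norm_nonneg _)
    fun n => ((n !⁻¹ : 𝕂) • T ^ n).le_opNorm x

theorem hasSum_exp_apply [CompleteSpace E] (T : E →L[𝕂] E) (x : E) :
    HasSum (fun n => (n !⁻¹ : 𝕂) • (T ^ n) x) (exp T x) :=
  (exp_series_hasSum_exp' (𝕂 := 𝕂) T).mapL (ContinuousLinearMap.apply 𝕂 E x)

end ExpApply

theorem exp_apply_mul_of_leibniz {𝕂 A : Type*} [RCLike 𝕂] [NormedRing A] [NormedAlgebra 𝕂 A]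
    [CompleteSpace A] (D : A →L[𝕂] A) (hD : ∀ a b : A, D (a * b) = D a * b + a * D b)
    (a b : A) : exp D (a * b) = exp D a * exp D b := by
  rw [← (hasSum_exp_apply D a).tsum_eq, ← (hasSum_exp_apply D b).tsum_eq,
    tsum_mul_tsum_eq_tsum_sum_antidiagonal_of_summable_norm
      (summable_norm_expSeries_apply D a) (summable_norm_expSeries_apply D b),
    ← (hasSum_exp_apply D (a * b)).tsum_eq]
  refine tsum_congr fun n => ?_
  rw [FunLike.coe_pow_eq_iterate, iterate_map_mul_of_leibniz D hD, smul_sum]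
  refine sum_congr rfl fun ⟨i, j⟩ hij => ?_
  obtain rfl : i + j = n := mem_antidiagonal.1 hij
  rw [smul_mul_smul_comm, ← Nat.cast_smul_eq_nsmul 𝕂, smul_smul, Nat.cast_add_choose,
    FunLike.coe_pow_eq_iterate, FunLike.coe_pow_eq_iterate, ← mul_div_assoc,
    inv_mul_cancel₀ (mod_cast (i + j).factorial_ne_zero), one_div, mul_inv]

theorem exp_mul_exp_neg (𝕂 : Type*) {𝔸 : Type*} [RCLike 𝕂] [NormedRing 𝔸] [NormedAlgebra 𝕂 𝔸]
    [CompleteSpace 𝔸] (x : 𝔸) : exp x * exp (-x) = 1 := by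
  rw [← exp_add_of_commute_of_mem_ball (𝕂 := 𝕂) (Commute.refl x).neg_right, add_neg_cancel,
    exp_zero] <;> simp [expSeries_radius_eq_top]

theorem exp_of_derivation_is_automorphism
    (A : Type*) [NormedRing A] [NormedAlgebra ℝ A] [CompleteSpace A]
    (D : A →L[ℝ] A) (hD : ∀ a b : A, D (a * b) = D a * b + a * D b) :
    (∀ a b : A, NormedSpace.exp D (a * b) =
        NormedSpace.exp D a * NormedSpace.exp D b) ∧
    NormedSpace.exp D * NormedSpace.exp (-D) = 1 ∧
    NormedSpace.exp (-D) * NormedSpace.exp D = 1 :=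
  ⟨exp_apply_mul_of_leibniz D hD, exp_mul_exp_neg ℝ D, by
    simpa using exp_mul_exp_neg ℝ (-D)⟩
end
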